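/- arXiv:2507.00569 — 10 statements merged into one kernel-verified Lean document; each statement's English description precedes it below -/
import Mathlib

section
/- Let n ≤ m and let C be an MRD code, i.e., an [n,k]_{q^m/q} code with minimum rank distance d = n - k + 1. Then C is rank-metric intersecting if and only if 2d > n. -/
open Module Submodule

variable (Fq : Type*) {L : Type*} [Field Fq] [Field L] [Algebra Fq L]

/-- The rank support of a vector `x ∈ L^n` (L = F_{q^m}, Fq = F_q): the `Fq`-span of the
rows of its coordinate matrix, equivalently the span of all `(f (x 1), …, f (x n))` for
`Fq`-linear functionals `f : L → Fq`. -/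
def rsupp {n : ℕ} (x : Fin n → L) : Submodule Fq (Fin n → Fq) :=
  Submodule.span Fq {v | ∃ f : L →ₗ[Fq] Fq, v = fun j => f (x j)}

/-- The rank (weight) of a vector. -/
noncomputable def rrk {n : ℕ} (x : Fin n → L) : ℕ :=
  Module.finrank Fq (rsupp Fq x)

/-- A linear rank-metric code is intersecting if the supports of any two nonzero
codewords meet nontrivially. -/
def RankIntersecting {n : ℕ} (C : Submodule L (Fin n → L)) : Prop :=
  ∀ c ∈ C, ∀ c' ∈ C, c ≠ 0 → c' ≠ 0 → rsupp Fq c ⊓ rsupp Fq c' ≠ ⊥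

/-- A rank-metric code is nondegenerate if the supports of its codewords span `Fq^n`. -/
def Nondeg {n : ℕ} (C : Submodule L (Fin n → L)) : Prop :=
  (⨆ c ∈ C, rsupp Fq c) = ⊤

/-- An `L`-hyperplane of `L^k`. -/
def IsHyperplane {k : ℕ} (H : Submodule L (Fin k → L)) : Prop :=
  ∃ φ : (Fin k → L) →ₗ[L] L, φ ≠ 0 ∧ H = LinearMap.ker φ

/-- A `q`-system `U` is 2-spannable if it is spanned by its intersections with two
`L`-hyperplanes. -/
def TwoSpannable {k : ℕ} (U : Submodule Fq (Fin k → L)) : Prop :=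
  ∃ H₁ H₂ : Submodule L (Fin k → L), IsHyperplane H₁ ∧ IsHyperplane H₂ ∧
    U = (U ⊓ H₁.restrictScalars Fq) ⊔ (U ⊓ H₂.restrictScalars Fq)

/-- A minimal rank-metric code. -/
def MinimalCode {n : ℕ} (C : Submodule L (Fin n → L)) : Prop :=
  ∀ c ∈ C, ∀ c' ∈ C, rsupp Fq c ≤ rsupp Fq c' → ∃ lam : L, c' = lam • c

/-!
If `2d ≤ n`, let `S` be the rank support of a codeword of weight `d` and let `M` be a
`d × n` matrix over `F_q` whose kernel meets `S` trivially. Over `F_{q^m}` the kernel of `M`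
has dimension at least `n - d < k`, so it contains a nonzero codeword `c`. Since `M` has
entries in `F_q`, it commutes with every `F_q`-linear functional `F_{q^m} → F_q`; this puts
the rank support of `c` inside the kernel of `M` over `F_q`, hence it is disjoint from `S`.
Conversely, if `2d > n`, two subspaces of `F_q^n` of dimension at least `d` must meet.
-/

open Matrix

theorem exists_matrix_disjoint_ker_mulVecLin {n : ℕ} (S : Submodule Fq (Fin n → Fq)) :
    ∃ M : Matrix (Fin (finrank Fq S)) (Fin n) Fq, Disjoint (LinearMap.ker M.mulVecLin) S := by
  obtain ⟨g, hg⟩ := S.subtype.exists_leftInverse_of_injective S.ker_subtype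
  refine ⟨LinearMap.toMatrix' ((finBasis Fq S).equivFun.toLinearMap ∘ₗ g), ?_⟩
  rw [← Matrix.toLin'_apply', Matrix.toLin'_toMatrix', LinearEquiv.ker_comp,
    Submodule.disjoint_def]
  intro v hv hvS
  have hgv : g v = ⟨v, hvS⟩ := LinearMap.congr_fun hg ⟨v, hvS⟩
  rw [LinearMap.mem_ker, hgv] at hv
  exact congr_arg Subtype.val hv

theorem apply_mulVec_map_algebraMap {n r : ℕ} (M : Matrix (Fin r) (Fin n) Fq) (x : Fin n → L)
    (f : L →ₗ[Fq] Fq) :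
    (fun i => f ((M.map (algebraMap Fq L) *ᵥ x) i)) = M *ᵥ fun j => f (x j) := by
  funext i
  simp only [Matrix.mulVec, dotProduct, Matrix.map_apply, map_sum, ← Algebra.smul_def,
    map_smul, smul_eq_mul]

theorem rsupp_le_ker_of_mulVec_map_eq_zero {n r : ℕ} (M : Matrix (Fin r) (Fin n) Fq)
    {x : Fin n → L} (hx : M.map (algebraMap Fq L) *ᵥ x = 0) :
    rsupp Fq x ≤ LinearMap.ker M.mulVecLin := by
  rw [rsupp, Submodule.span_le]
  rintro v ⟨f, rfl⟩
  rw [SetLike.mem_coe, LinearMap.mem_ker, Matrix.mulVecLin_apply,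
    ← apply_mulVec_map_algebraMap, hx]
  funext i
  simp

theorem exists_mem_ne_zero_disjoint_rsupp {n : ℕ} (C : Submodule L (Fin n → L))
    (S : Submodule Fq (Fin n → Fq)) (hS : finrank Fq S < finrank L C) :
    ∃ c ∈ C, c ≠ 0 ∧ Disjoint (rsupp Fq c) S := by
  obtain ⟨M, hM⟩ := exists_matrix_disjoint_ker_mulVecLin Fq S
  set Φ := (M.map (algebraMap Fq L)).mulVecLin
  have hK : n ≤ finrank L (LinearMap.ker Φ) + finrank Fq S := by
    have hrange := Submodule.finrank_le (LinearMap.range Φ)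
    have := LinearMap.finrank_range_add_finrank_ker Φ
    simp only [Module.finrank_pi, Fintype.card_fin] at hrange this
    omega
  have hCK : ¬ Disjoint C (LinearMap.ker Φ) := fun hdisj => by
    have := Submodule.finrank_add_finrank_le_of_disjoint hdisj
    rw [Module.finrank_pi, Fintype.card_fin] at this
    omega
  obtain ⟨c, hcC, hcK, hc⟩ : ∃ c ∈ C, c ∈ LinearMap.ker Φ ∧ c ≠ 0 := by
    simpa [Submodule.disjoint_def] using hCK
  exact ⟨c, hcC, hc, hM.mono_left (rsupp_le_ker_of_mulVec_map_eq_zero Fq M hcK)⟩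

theorem rsupp_inf_rsupp_ne_bot {n : ℕ} {x y : Fin n → L} (h : n < rrk Fq x + rrk Fq y) :
    rsupp Fq x ⊓ rsupp Fq y ≠ ⊥ := fun hbot => by
  have := Submodule.finrank_add_finrank_le_of_disjoint (disjoint_iff.mpr hbot)
  rw [Module.finrank_pi, Fintype.card_fin] at this
  exact absurd h (not_lt.mpr this)

theorem stmt4 {n k d : ℕ}
    (C : Submodule L (Fin n → L)) (hk : finrank L C = k)
    (hmin : ∀ c ∈ C, c ≠ 0 → d ≤ rrk Fq c) (hex : ∃ c ∈ C, c ≠ 0 ∧ rrk Fq c = d)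
    (hMRD : d = n - k + 1) : RankIntersecting Fq C ↔ 2 * d > n := by
  constructor
  · intro hint
    by_contra hle
    obtain ⟨c₀, hc₀C, hc₀, hc₀d⟩ := hex
    have hdk : rrk Fq c₀ < finrank L C := by omega
    obtain ⟨c, hcC, hc, hdisj⟩ := exists_mem_ne_zero_disjoint_rsupp Fq C (rsupp Fq c₀) hdk
    exact hint c₀ hc₀C c hcC hc₀ hc hdisj.symm.eq_bot
  · intro h2d c hc c' hc' hc0 hc'0
    have := hmin c hc hc0
    have := hmin c' hc' hc'0
    exact rsupp_inf_rsupp_ne_bot Fq (by omega)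
end

section
/- Let U be an [n,k]_{q^m/q} system (an F_q-subspace of F_{q^m}^k of F_q-dimension n spanning F_{q^m}^k over F_{q^m}). If n ≤ 2k - 2, then U is 2-spannable, i.e., there exist two F_{q^m}-linear hyperplanes H₁, H₂ of F_{q^m}^k such that U = (H₁ ∩ U) + (H₂ ∩ U). -/
open Module Submodule

variable (Fq : Type*) {L : Type*} [Field Fq] [Field L] [Algebra Fq L]

/-! Split an `Fq`-spanning set of `U`, of size `n ≤ 2k - 2`, into two parts of size at most
`k - 1`. Each part spans an `L`-subspace of dimension `< k`, hence lies in an `L`-hyperplane,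
and the two `Fq`-spans of the parts already add up to `U`. -/

theorem Finset.exists_union_eq_of_card_le_add {α : Type*} [DecidableEq α] {s : Finset α}
    {a b : ℕ} (h : s.card ≤ a + b) :
    ∃ s₁ s₂ : Finset α, s₁ ∪ s₂ = s ∧ s₁.card ≤ a ∧ s₂.card ≤ b := by
  obtain ⟨t, hts, ht⟩ := s.exists_subset_card_eq (min_le_right a s.card)
  refine ⟨t, s \ t, Finset.union_sdiff_of_subset hts, ht ▸ min_le_left _ _, ?_⟩
  rw [Finset.card_sdiff_of_subset hts]
  omega

theorem exists_ne_zero_span_le_ker_of_card_lt {K V : Type*} [Field K] [AddCommGroup V]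
    [Module K V] [FiniteDimensional K V] (s : Finset V) (hs : s.card < finrank K V) :
    ∃ φ : V →ₗ[K] K, φ ≠ 0 ∧ span K (s : Set V) ≤ LinearMap.ker φ := by
  refine (span K (s : Set V)).exists_le_ker_of_lt_top (lt_top_iff_ne_top.2 fun htop => ?_)
  have := finrank_span_finset_le_card (R := K) s
  rw [Set.finrank, htop, finrank_top] at this
  omega

theorem exists_isHyperplane_subset_of_card_lt {k : ℕ}
    (s : Finset (Fin k → L)) (hs : s.card < k) :
    ∃ H : Submodule L (Fin k → L), IsHyperplane H ∧ (s : Set (Fin k → L)) ⊆ H := by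
  obtain ⟨φ, hφ, hker⟩ := exists_ne_zero_span_le_ker_of_card_lt (K := L) s (by simpa using hs)
  exact ⟨LinearMap.ker φ, ⟨φ, hφ, rfl⟩, subset_span.trans hker⟩

theorem twoSpannable_of_union_subset {k : ℕ} {U : Submodule Fq (Fin k → L)}
    {s₁ s₂ : Set (Fin k → L)} (hspan : span Fq (s₁ ∪ s₂) = U) {H₁ H₂ : Submodule L (Fin k → L)}
    (hH₁ : IsHyperplane H₁) (hH₂ : IsHyperplane H₂) (hs₁ : s₁ ⊆ H₁) (hs₂ : s₂ ⊆ H₂) :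
    TwoSpannable Fq U := by
  have hsU : s₁ ∪ s₂ ⊆ U := hspan ▸ subset_span
  have hle : ∀ {s : Set (Fin k → L)} {H : Submodule L (Fin k → L)}, s ⊆ s₁ ∪ s₂ → s ⊆ H →
      span Fq s ≤ U ⊓ H.restrictScalars Fq := fun hs hsH =>
    span_le.2 (Set.subset_inter (hs.trans hsU) hsH)
  refine ⟨H₁, H₂, hH₁, hH₂, le_antisymm ?_ (sup_le inf_le_left inf_le_left)⟩
  calc U = span Fq s₁ ⊔ span Fq s₂ := by rw [← hspan, span_union]
    _ ≤ _ := sup_le_sup (hle Set.subset_union_left hs₁) (hle Set.subset_union_right hs₂)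

theorem stmt5 [FiniteDimensional Fq L] {k n : ℕ} (U : Submodule Fq (Fin k → L))
    (hn : finrank Fq U = n) (h : n + 2 ≤ 2 * k) : TwoSpannable Fq U := by
  classical
  obtain ⟨s, -, hcard, hspan, -⟩ := exists_finset_span_eq_linearIndepOn Fq (U : Set (Fin k → L))
  rw [span_eq] at hcard hspan
  rw [hn] at hcard
  obtain ⟨s₁, s₂, rfl, hs₁, hs₂⟩ :=
    Finset.exists_union_eq_of_card_le_add (a := k - 1) (b := k - 1) (by omega : s.card ≤ _)
  obtain ⟨H₁, hH₁, hsH₁⟩ := exists_isHyperplane_subset_of_card_lt s₁ (by omega)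
  obtain ⟨H₂, hH₂, hsH₂⟩ := exists_isHyperplane_subset_of_card_lt s₂ (by omega)
  exact twoSpannable_of_union_subset Fq (by rwa [Finset.coe_union] at hspan) hH₁ hH₂ hsH₁ hsH₂
end

section
/- Let U be an [n,k]_{q^m/q} system that is not 2-spannable. Then for every F_{q^m}-hyperplane H of F_{q^m}^k, dim_{F_q}(U ∩ H) ≤ n - k. -/
open Module Submodule

variable (Fq : Type*) {L : Type*} [Field Fq] [Field L] [Algebra Fq L]

/-!
If `dim (U ∩ H) + k > n`, choose a complement `P` of `U ∩ H` in `U`. Then `dim_{F_q} P < k`,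
so the `F_{q^m}`-span of `P` is a proper subspace and lies in some hyperplane `H'`; hence
`U = (U ∩ H) + P = (U ∩ H) + (U ∩ H')` and `U` is 2-spannable.
-/

theorem Submodule.finrank_span_le_finrank {K V : Type*} [Field K] [AddCommGroup V] [Module K V]
    [Module L V] [Algebra K L] [IsScalarTower K L V] (P : Submodule K V) [FiniteDimensional K P] :
    finrank L (span L (P : Set V)) ≤ finrank K P := by
  let b := finBasis K P
  have hP : span L (P : Set V) ≤ span L (Set.range (P.subtype ∘ b)) := by
    refine span_le.2 fun p hp => span_le_restrictScalars K L _ ?_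
    have hp' := mem_map_of_mem (f := P.subtype) (b.mem_span ⟨p, hp⟩)
    rwa [map_span, ← Set.range_comp] at hp'
  have := FiniteDimensional.span_of_finite L (Set.finite_range (P.subtype ∘ b))
  calc finrank L (span L (P : Set V))
      ≤ finrank L (span L (Set.range (P.subtype ∘ b))) := finrank_mono hP
    _ ≤ Fintype.card (Fin (finrank K P)) := finrank_range_le_card _
    _ = finrank K P := Fintype.card_fin _

theorem exists_isHyperplane_le_of_ne_top {k : ℕ} {S : Submodule L (Fin k → L)} (hS : S ≠ ⊤) :
    ∃ H, IsHyperplane H ∧ S ≤ H := by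
  obtain ⟨φ, hφ, hSφ⟩ := exists_dual_map_eq_bot_of_lt_top hS.lt_top inferInstance
  exact ⟨LinearMap.ker φ, ⟨φ, hφ, rfl⟩, map_le_iff_le_comap.mp hSφ.le⟩

theorem exists_isHyperplane_le_of_finrank_lt [FiniteDimensional Fq L] {k : ℕ}
    (P : Submodule Fq (Fin k → L)) (hP : finrank Fq P < k) :
    ∃ H : Submodule L (Fin k → L), IsHyperplane H ∧ P ≤ H.restrictScalars Fq := by
  have hspan : span L (P : Set (Fin k → L)) ≠ ⊤ := by
    intro htop
    have := P.finrank_span_le_finrank (L := L)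
    rw [htop, finrank_top, finrank_fin_fun] at this
    omega
  obtain ⟨H, hH, hPH⟩ := exists_isHyperplane_le_of_ne_top hspan
  exact ⟨H, hH, fun x hx => hPH (subset_span hx)⟩

theorem twoSpannable_of_finrank_lt [FiniteDimensional Fq L] {k : ℕ}
    {U : Submodule Fq (Fin k → L)} {H : Submodule L (Fin k → L)} (hH : IsHyperplane H)
    (hlt : finrank Fq U < finrank Fq ↥(U ⊓ H.restrictScalars Fq) + k) :
    TwoSpannable Fq U := by
  set W := U ⊓ H.restrictScalars Fq
  obtain ⟨P, hWP, hWPU⟩ := IsModularLattice.exists_disjoint_and_sup_eq (inf_le_left : W ≤ U)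
  have hdim : finrank Fq W + finrank Fq P = finrank Fq U := by
    rw [← hWPU, ← finrank_sup_add_finrank_inf_eq, hWP.eq_bot, finrank_bot, add_zero]
  obtain ⟨H', hH', hPH'⟩ := exists_isHyperplane_le_of_finrank_lt Fq P (by omega)
  have hPU : P ≤ U := hWPU ▸ le_sup_right
  refine ⟨H, H', hH, hH', le_antisymm ?_ (sup_le inf_le_left inf_le_left)⟩
  calc U = W ⊔ P := hWPU.symm
    _ ≤ W ⊔ (U ⊓ H'.restrictScalars Fq) := sup_le_sup_left (le_inf hPU hPH') W

theorem stmt7 [FiniteDimensional Fq L] {k n : ℕ} (U : Submodule Fq (Fin k → L))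
    (hn : finrank Fq U = n)
    (h2 : ¬ TwoSpannable Fq U) :
    ∀ H : Submodule L (Fin k → L), IsHyperplane H →
      finrank Fq ↥(U ⊓ H.restrictScalars Fq) + k ≤ n := by
  intro H hH
  by_contra! hlt
  exact h2 (twoSpannable_of_finrank_lt Fq hH (hn ▸ hlt))
end

section
/- Let C be a nondegenerate [n,k,d]_{q^m/q} rank-metric intersecting code. Then k ≤ d ≤ m. -/
open Module Submodule

variable (Fq : Type*) {L : Type*} [Field Fq] [Field L] [Algebra Fq L]

section Aux

variable {n : ℕ}

/-- The evaluation map `f ↦ (f (x j))_j`. -/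
def evalMap (x : Fin n → L) : (L →ₗ[Fq] Fq) →ₗ[Fq] (Fin n → Fq) where
  toFun f := fun j => f (x j)
  map_add' f g := by ext j; simp
  map_smul' a f := by ext j; simp

lemma rsupp_eq_range (x : Fin n → L) :
    rsupp Fq x = LinearMap.range (evalMap Fq x) := by
  have hset : {v : Fin n → Fq | ∃ f : L →ₗ[Fq] Fq, v = fun j => f (x j)} =
      (LinearMap.range (evalMap Fq x) : Set (Fin n → Fq)) := by
    ext v
    constructor
    · rintro ⟨f, rfl⟩; exact ⟨f, rfl⟩
    · rintro ⟨f, rfl⟩; exact ⟨f, rfl⟩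
  rw [rsupp, hset, Submodule.span_eq]

lemma rrk_le_finrank [FiniteDimensional Fq L] (x : Fin n → L) :
    rrk Fq x ≤ finrank Fq L := by
  rw [rrk, rsupp_eq_range]
  calc finrank Fq ↥(LinearMap.range (evalMap Fq x))
      ≤ finrank Fq (L →ₗ[Fq] Fq) := LinearMap.finrank_range_le _
    _ = finrank Fq L * finrank Fq Fq := Module.finrank_linearMap Fq Fq L Fq
    _ = finrank Fq L := by simp

/-- The `L`-linear extension of a matrix over `Fq`. -/
def extMap {m : ℕ} (B : Matrix (Fin m) (Fin n) Fq) :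
    (Fin n → L) →ₗ[L] (Fin m → L) where
  toFun x := fun i => ∑ j, algebraMap Fq L (B i j) * x j
  map_add' x y := by
    ext i
    simp [mul_add, Finset.sum_add_distrib]
  map_smul' c x := by
    ext i
    simp only [Pi.smul_apply, smul_eq_mul, RingHom.id_apply, Finset.mul_sum]
    refine Finset.sum_congr rfl fun j _ => by ring

lemma apply_extMap [FiniteDimensional Fq L] {m : ℕ} (B : Matrix (Fin m) (Fin n) Fq)
    (x : Fin n → L) (f : L →ₗ[Fq] Fq) (i : Fin m) :
    f (extMap Fq B x i) = ∑ j, B i j * f (x j) := by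
  have : extMap Fq B x i = ∑ j, B i j • x j := by
    simp [extMap, Algebra.smul_def]
  rw [this, map_sum]
  refine Finset.sum_congr rfl fun j _ => by
    rw [map_smul, smul_eq_mul]

lemma extMap_eq_zero_of_rsupp_le [FiniteDimensional Fq L] {m : ℕ}
    (B : Matrix (Fin m) (Fin n) Fq) (x : Fin n → L)
    (h : rsupp Fq x ≤ LinearMap.ker (Matrix.toLin' B)) :
    extMap Fq B x = 0 := by
  ext i
  have hdual : ∀ f : L →ₗ[Fq] Fq, f (extMap Fq B x i) = 0 := by
    intro f
    rw [apply_extMap]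
    have hmem : (fun j => f (x j)) ∈ rsupp Fq x :=
      Submodule.subset_span ⟨f, rfl⟩
    have := h hmem
    rw [LinearMap.mem_ker] at this
    have := congrFun this i
    simpa [Matrix.toLin'_apply, Matrix.mulVec, dotProduct] using this
  exact (Module.forall_dual_apply_eq_zero_iff Fq _).mp hdual

end Aux

/-- a nondegenerate rank-metric intersecting `[n,k,d]` code satisfies
`k ≤ d ≤ m`. -/
theorem stmt8 [FiniteDimensional Fq L] {n k d : ℕ} (C : Submodule L (Fin n → L))
    (hk : finrank L C = k) (hnd : Nondeg Fq C)
    (hmin : ∀ c ∈ C, c ≠ 0 → d ≤ rrk Fq c) (hex : ∃ c ∈ C, c ≠ 0 ∧ rrk Fq c = d)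
    (hint : RankIntersecting Fq C) : k ≤ d ∧ d ≤ finrank Fq L := by
  obtain ⟨c, hcC, hc0, hcd⟩ := hex
  constructor
  · -- k ≤ d
    classical
    set S : Submodule Fq (Fin n → Fq) := rsupp Fq c with hS
    obtain ⟨T, hT⟩ := Submodule.exists_isCompl S
    -- the quotient by T has dimension d
    have hfinS : finrank Fq S = d := hcd
    have e1 : ((Fin n → Fq) ⧸ T) ≃ₗ[Fq] S :=
      Submodule.quotientEquivOfIsCompl T S hT.symm
    have hq : finrank Fq ((Fin n → Fq) ⧸ T) = finrank Fq (Fin d → Fq) := by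
      rw [e1.finrank_eq, hfinS, Module.finrank_fin_fun]
    have e2 : ((Fin n → Fq) ⧸ T) ≃ₗ[Fq] (Fin d → Fq) :=
      LinearEquiv.ofFinrankEq _ _ hq
    set A : (Fin n → Fq) →ₗ[Fq] (Fin d → Fq) := e2.toLinearMap.comp T.mkQ with hA
    have hkerA : LinearMap.ker A = T := by
      rw [hA, LinearMap.ker_comp, LinearEquiv.ker, Submodule.comap_bot,
        Submodule.ker_mkQ]
    set B : Matrix (Fin d) (Fin n) Fq := LinearMap.toMatrix' A with hB
    have hBA : Matrix.toLin' B = A := Matrix.toLin'_toMatrix' A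
    -- the restriction of extMap to C is injective
    set P : (Fin n → L) →ₗ[L] (Fin d → L) := extMap Fq B with hP
    have hinj : Function.Injective (P.comp C.subtype) := by
      rw [← LinearMap.ker_eq_bot]
      rw [Submodule.eq_bot_iff]
      rintro ⟨x, hxC⟩ hx
      rw [LinearMap.mem_ker] at hx
      by_contra hx0
      have hxne : x ≠ 0 := by
        intro h
        exact hx0 (by simpa [h] using (rfl : (⟨x, hxC⟩ : C) = ⟨x, hxC⟩) ▸ Subtype.ext h)
      -- rsupp x ≤ T
      have hPx : extMap Fq B x = 0 := hx
      -- show rsupp x ≤ ker (toLin' B)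
      have hle : rsupp Fq x ≤ T := by
        intro v hv
        -- decompose: it suffices that every generator is in T
        revert v
        rw [← SetLike.le_def]
        rw [rsupp]
        rw [Submodule.span_le]
        rintro v ⟨f, rfl⟩
        -- A (f ∘ x) = 0
        have : A (fun j => f (x j)) = 0 := by
          ext i
          have h1 : f (extMap Fq B x i) = ∑ j, B i j * f (x j) :=
            apply_extMap Fq B x f i
          rw [hPx] at h1
          simp only [Pi.zero_apply, map_zero] at h1
          rw [← hBA]
          simpa [Matrix.toLin'_apply, Matrix.mulVec, dotProduct]
            using h1.symm
        rw [← hkerA]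
        exact LinearMap.mem_ker.mpr this
      have hmeet := hint c hcC x hxC hc0 hxne
      apply hmeet
      rw [Submodule.eq_bot_iff]
      intro v hv
      have hvT : v ∈ T := hle hv.2
      have hvS : v ∈ S := hv.1
      exact (Submodule.eq_bot_iff _).mp (disjoint_iff.mp hT.disjoint) v ⟨hvS, hvT⟩
    have := LinearMap.finrank_le_finrank_of_injective hinj
    rw [hk] at this
    simpa [Module.finrank_fin_fun] using this
  · -- d ≤ m
    rw [← hcd]
    exact rrk_le_finrank Fq c
end

section
/- A nondegenerate [n,k,d]_{q^m/q} code C with generator matrix G is rank-metric intersecting if and only if for every A ∈ GL(n,q), the code C·A is Hamming-metric intersecting. -/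
open Module Submodule

variable (Fq : Type*) {L : Type*} [Field Fq] [Field L] [Algebra Fq L]

/-!
The Hamming support of `x` is the set of coordinates on which `σ(x)` does not vanish
identically, and `σ(c·A) = σ(c)·A`. So a nonzero `u ∈ σ(c) ∩ σ(c')` gives, for invertible `A`,
a coordinate in the support of `u·A` that is common to `c·A` and `c'·A`. Conversely, if
`σ(c) ∩ σ(c') = 0`, enlarge `σ(c)` to a complement of `σ(c')` and let `A` map a basis adapted
to this decomposition onto the standard basis: then `σ(c·A)` and `σ(c'·A)` live on disjoint
sets of coordinates, hence so do the Hamming supports of `c·A` and `c'·A`.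
-/

open Matrix

section Separation

variable {K ι : Type*} [Field K] [Fintype ι]

theorem exists_linearEquiv_forall_apply_eq_zero_or_of_disjoint {U W : Submodule K (ι → K)}
    (hUW : Disjoint U W) :
    ∃ e : (ι → K) ≃ₗ[K] (ι → K), ∀ i, (∀ u ∈ U, e u i = 0) ∨ (∀ w ∈ W, e w i = 0) := by
  obtain ⟨U', hUU', hc⟩ := hUW.exists_isCompl
  let b := ((finBasis K U').prod (finBasis K W)).map (prodEquivOfIsCompl U' W hc)
  have hcard : Fintype.card ι = Fintype.card (Fin (finrank K U') ⊕ Fin (finrank K W)) := by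
    simp [finrank_add_eq_of_isCompl hc]
  let σ := Fintype.equivOfCardEq hcard
  refine ⟨(b.reindex σ.symm).equivFun, fun i => ?_⟩
  simp only [Basis.equivFun_apply, Basis.repr_reindex_apply, Equiv.symm_symm]
  rcases σ i with j | j
  · right
    intro w hw
    simp [b, (projectionOnto_apply_eq_zero_iff hc).2 hw]
  · left
    intro u hu
    simp [b, (projectionOnto_apply_eq_zero_iff hc.symm).2 (hUU' hu)]

theorem exists_isUnit_vecMul_eq [DecidableEq ι] (e : (ι → K) ≃ₗ[K] (ι → K)) :
    ∃ A : Matrix ι ι K, IsUnit A ∧ ∀ v, vecMul v A = e v := by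
  have he : ∀ v, vecMul v (LinearMap.toMatrix' e.toLinearMap)ᵀ = e v := fun v => by
    rw [vecMul_transpose, ← toLin'_apply, toLin'_toMatrix', LinearEquiv.coe_coe]
  refine ⟨_, vecMul_injective_iff_isUnit.1 fun v w hvw => ?_, he⟩
  simpa only [he, e.injective.eq_iff] using hvw

end Separation

section RankSupport

variable {n : ℕ}

theorem apply_ne_zero_iff_exists_mem_rsupp (x : Fin n → L) (i : Fin n) :
    x i ≠ 0 ↔ ∃ v ∈ rsupp Fq x, v i ≠ 0 := by
  constructor
  · intro hx
    obtain ⟨f, hf⟩ : ∃ f : L →ₗ[Fq] Fq, f (x i) ≠ 0 := by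
      by_contra! h
      exact hx ((forall_dual_apply_eq_zero_iff Fq (x i)).1 h)
    exact ⟨_, subset_span ⟨f, rfl⟩, hf⟩
  · rintro ⟨v, hv, hvi⟩ hx
    have hker : rsupp Fq x ≤ LinearMap.ker (LinearMap.proj i) :=
      span_le.2 <| by rintro _ ⟨f, rfl⟩; simp [hx]
    exact hvi (hker hv)

variable {Fq}

theorem rsupp_vecMul_map (x : Fin n → L) (A : Matrix (Fin n) (Fin n) Fq) :
    rsupp Fq (vecMul x (A.map (algebraMap Fq L))) = (rsupp Fq x).map A.vecMulLinear := by
  have hcomm : ∀ f : L →ₗ[Fq] Fq,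
      (fun i => f (vecMul x (A.map (algebraMap Fq L)) i)) = vecMul (fun j => f (x j)) A :=
    fun f => funext fun i => by
      simp [vecMul, dotProduct, ← Algebra.commutes, ← Algebra.smul_def, mul_comm (f _)]
  rw [rsupp, rsupp, map_span]
  congr 1
  ext v
  constructor
  · rintro ⟨f, rfl⟩
    exact ⟨_, ⟨f, rfl⟩, (hcomm f).symm⟩
  · rintro ⟨_, ⟨f, rfl⟩, rfl⟩
    exact ⟨f, (hcomm f).symm⟩

end RankSupport

theorem stmt10 {n : ℕ} (C : Submodule L (Fin n → L)) :
    RankIntersecting Fq C ↔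
      ∀ A : Matrix (Fin n) (Fin n) Fq, IsUnit A →
        ∀ c ∈ C, ∀ c' ∈ C, c ≠ 0 → c' ≠ 0 →
          ∃ i, Matrix.vecMul c (A.map (algebraMap Fq L)) i ≠ 0 ∧
               Matrix.vecMul c' (A.map (algebraMap Fq L)) i ≠ 0 := by
  constructor
  · intro hint A hA c hc c' hc' hc0 hc'0
    obtain ⟨u, ⟨hu, hu'⟩, hu0⟩ := exists_mem_ne_zero_of_ne_bot (hint c hc c' hc' hc0 hc'0)
    have huA : vecMul u A ≠ 0 := by
      simpa using (vecMul_injective_iff_isUnit.2 hA).ne (a₂ := 0) hu0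
    obtain ⟨i, hi⟩ := Function.ne_iff.1 huA
    refine ⟨i, ?_, ?_⟩ <;> rw [apply_ne_zero_iff_exists_mem_rsupp Fq, rsupp_vecMul_map]
    exacts [⟨_, mem_map_of_mem hu, hi⟩, ⟨_, mem_map_of_mem hu', hi⟩]
  · intro hham c hc c' hc' hc0 hc'0 hbot
    obtain ⟨e, he⟩ := exists_linearEquiv_forall_apply_eq_zero_or_of_disjoint (disjoint_iff.2 hbot)
    obtain ⟨A, hA, hAe⟩ := exists_isUnit_vecMul_eq e
    obtain ⟨i, hi, hi'⟩ := hham A hA c hc c' hc' hc0 hc'0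
    rw [apply_ne_zero_iff_exists_mem_rsupp Fq, rsupp_vecMul_map] at hi hi'
    obtain ⟨_, ⟨u, hu, rfl⟩, hui⟩ := hi
    obtain ⟨_, ⟨u', hu', rfl⟩, hu'i⟩ := hi'
    rw [vecMulLinear_apply, hAe] at hui hu'i
    rcases he i with h | h
    exacts [hui (h u hu), hu'i (h u' hu')]
end

section
/- A nondegenerate [n,k]_{q^m/q} code C is rank-metric intersecting if and only if its associated q-system U (the F_q-span of the columns of a generator matrix) is not 2-spannable. -/
open Module Submodule

variable (Fq : Type*) {L : Type*} [Field Fq] [Field L] [Algebra Fq L]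

def dotL {k : ℕ} (u : Fin k → L) : (Fin k → L) →ₗ[L] L := ∑ i, u i • LinearMap.proj i

lemma dotL_apply {k : ℕ} (u x : Fin k → L) : dotL u x = ∑ i, u i * x i := by
  simp [dotL, smul_eq_mul]

lemma dotL_single {k : ℕ} (u : Fin k → L) (i : Fin k) : dotL u (Pi.single i 1) = u i := by
  rw [dotL_apply]
  rw [Finset.sum_eq_single i]
  · simp
  · intro j _ hj; simp [Pi.single_apply, hj]
  · simp

lemma eq_dotL {k : ℕ} (Φ : (Fin k → L) →ₗ[L] L) :
    Φ = dotL (fun i => Φ (Pi.single i 1)) := by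
  refine LinearMap.ext fun x => ?_
  rw [LinearMap.pi_apply_eq_sum_univ Φ x, dotL_apply]
  refine Finset.sum_congr rfl fun i _ => ?_
  have h : (fun j => if i = j then (1:L) else 0) = Pi.single i 1 := by
    funext j; simp [Pi.single_apply, eq_comm]
  rw [smul_eq_mul, mul_comm, h]

lemma vecMul_eq_dotL {n k : ℕ} (G : Matrix (Fin k) (Fin n) L) (u : Fin k → L) (j : Fin n) :
    Matrix.vecMul u G j = dotL u (fun i => G i j) := by
  rw [dotL_apply]
  simp [Matrix.vecMul, dotProduct]

lemma rsupp_eq {n : ℕ} (x : Fin n → L) :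
    rsupp Fq x = LinearMap.range (LinearMap.pi (fun j => LinearMap.applyₗ (x j)) :
      (L →ₗ[Fq] Fq) →ₗ[Fq] (Fin n → Fq)) := by
  rw [rsupp]
  apply le_antisymm
  · rw [Submodule.span_le]
    rintro v ⟨f, rfl⟩
    exact ⟨f, by funext j; simp⟩
  · rintro v ⟨f, rfl⟩
    exact Submodule.subset_span ⟨f, by funext j; simp⟩

lemma mem_rsupp_iff {n : ℕ} (x : Fin n → L) (v : Fin n → Fq) :
    v ∈ rsupp Fq x ↔ ∃ f : L →ₗ[Fq] Fq, v = fun j => f (x j) := by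
  rw [rsupp_eq, LinearMap.mem_range]
  constructor
  · rintro ⟨f, rfl⟩; exact ⟨f, by funext j; simp⟩
  · rintro ⟨f, rfl⟩; exact ⟨f, by funext j; simp⟩

lemma exists_sep {V : Type*} [AddCommGroup V] [Module Fq V]
    (p : Submodule Fq V) {z : V} (hz : z ∉ p) :
    ∃ F : V →ₗ[Fq] Fq, (∀ y ∈ p, F y = 0) ∧ F z ≠ 0 := by
  by_contra h
  push_neg at h
  have hall : ∀ φ : Module.Dual Fq (V ⧸ p), φ (Submodule.Quotient.mk z) = 0 := by
    intro φ
    exact h (φ.comp p.mkQ) fun y hy => by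
      simp [Submodule.mkQ_apply, (Submodule.Quotient.mk_eq_zero p).mpr hy]
  have := (Module.forall_dual_apply_eq_zero_iff Fq _).mp hall
  exact hz ((Submodule.Quotient.mk_eq_zero p).mp this)

/-- a nondegenerate code is rank-metric intersecting iff its associated
`q`-system (the `Fq`-span of the columns of a generator matrix) is not 2-spannable. -/
theorem stmt11 [FiniteDimensional Fq L] {n k : ℕ}
    (C : Submodule L (Fin n → L)) (G : Matrix (Fin k) (Fin n) L)
    (hG : ∀ x, x ∈ C ↔ ∃ u : Fin k → L, x = Matrix.vecMul u G)
    (hrank : finrank L C = k) (hnd : Nondeg Fq C)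
    (U : Submodule Fq (Fin k → L))
    (hU : U = Submodule.span Fq (Set.range fun j : Fin n => fun i : Fin k => G i j)) :
    RankIntersecting Fq C ↔ ¬ TwoSpannable Fq U := by
  classical
  set col : Fin n → (Fin k → L) := fun j i => G i j with hcol
  have hcolU : ∀ j, col j ∈ U := fun j => hU ▸ Submodule.subset_span ⟨j, rfl⟩
  -- injectivity of u ↦ u ᵥ* G
  have hrange : LinearMap.range (Matrix.vecMulLinear G) = C := by
    ext x
    rw [LinearMap.mem_range, hG]
    constructor
    · rintro ⟨u, rfl⟩; exact ⟨u, by simp [Matrix.vecMulLinear_apply]⟩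
    · rintro ⟨u, rfl⟩; exact ⟨u, by simp [Matrix.vecMulLinear_apply]⟩
  have hinj : Function.Injective (Matrix.vecMulLinear G) := by
    rw [← LinearMap.ker_eq_bot]
    have h1 := LinearMap.finrank_range_add_finrank_ker (Matrix.vecMulLinear G)
    rw [hrange, hrank, Module.finrank_fin_fun] at h1
    have h0 : finrank L (LinearMap.ker (Matrix.vecMulLinear G)) = 0 := by omega
    exact Submodule.finrank_eq_zero.mp h0
  constructor
  · -- intersecting → ¬ 2-spannable
    rintro hI ⟨H₁, H₂, ⟨Φ₁, hΦ₁, rfl⟩, ⟨Φ₂, hΦ₂, rfl⟩, hsup⟩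
    set u₁ : Fin k → L := fun i => Φ₁ (Pi.single i 1) with hu₁
    set u₂ : Fin k → L := fun i => Φ₂ (Pi.single i 1) with hu₂
    have hd₁ : Φ₁ = dotL u₁ := eq_dotL Φ₁
    have hd₂ : Φ₂ = dotL u₂ := eq_dotL Φ₂
    have hu₁0 : u₁ ≠ 0 := by
      rintro h; apply hΦ₁; rw [hd₁, h]
      refine LinearMap.ext fun x => ?_
      rw [dotL_apply]; simp
    have hu₂0 : u₂ ≠ 0 := by
      rintro h; apply hΦ₂; rw [hd₂, h]
      refine LinearMap.ext fun x => ?_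
      rw [dotL_apply]; simp
    have hc₁ : Matrix.vecMul u₁ G ∈ C := (hG _).mpr ⟨u₁, rfl⟩
    have hc₂ : Matrix.vecMul u₂ G ∈ C := (hG _).mpr ⟨u₂, rfl⟩
    have hc₁0 : Matrix.vecMul u₁ G ≠ 0 := by
      intro h
      apply hu₁0
      apply hinj
      simpa [Matrix.vecMulLinear_apply] using h
    have hc₂0 : Matrix.vecMul u₂ G ≠ 0 := by
      intro h
      apply hu₂0
      apply hinj
      simpa [Matrix.vecMulLinear_apply] using h
    apply hI _ hc₁ _ hc₂ hc₁0 hc₂0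
    rw [eq_bot_iff]
    intro v hv
    rw [Submodule.mem_bot]
    obtain ⟨hv₁, hv₂⟩ := Submodule.mem_inf.mp hv
    obtain ⟨f₁, rfl⟩ := (mem_rsupp_iff (Fq := Fq) _ _).mp hv₁
    obtain ⟨f₂, hf₂⟩ := (mem_rsupp_iff (Fq := Fq) _ _).mp hv₂
    -- ψ₁ and ψ₂ agree on the generators of U, hence on U
    have hagree : ∀ x ∈ U, f₁ (Φ₁ x) = f₂ (Φ₂ x) := by
      have := LinearMap.eqOn_span (R := Fq)
        (f := f₁.comp (Φ₁.restrictScalars Fq)) (g := f₂.comp (Φ₂.restrictScalars Fq))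
        (s := Set.range col) ?_
      · intro x hx
        have hx' : x ∈ Submodule.span Fq (Set.range col) := hU ▸ hx
        simpa using this hx'
      · rintro _ ⟨j, rfl⟩
        have e1 : Φ₁ (col j) = Matrix.vecMul u₁ G j := by
          rw [hd₁, vecMul_eq_dotL]
        have e2 : Φ₂ (col j) = Matrix.vecMul u₂ G j := by
          rw [hd₂, vecMul_eq_dotL]
        have := congrFun hf₂ j
        simp only [LinearMap.comp_apply, LinearMap.restrictScalars_apply, e1, e2]
        rw [← this]
    have hzero : ∀ x ∈ U, f₁ (Φ₁ x) = 0 := by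
      intro x hx
      rw [hsup] at hx
      obtain ⟨a, ha, b, hb, rfl⟩ := Submodule.mem_sup.mp hx
      have ha1 : Φ₁ a = 0 := by
        have := (Submodule.mem_inf.mp ha).2
        rwa [Submodule.restrictScalars_mem, LinearMap.mem_ker] at this
      have hb2 : Φ₂ b = 0 := by
        have := (Submodule.mem_inf.mp hb).2
        rwa [Submodule.restrictScalars_mem, LinearMap.mem_ker] at this
      have hbU : b ∈ U := (Submodule.mem_inf.mp hb).1
      rw [map_add, map_add, ha1, map_zero, zero_add, hagree b hbU, hb2, map_zero]
    funext j
    have e1 : Φ₁ (col j) = Matrix.vecMul u₁ G j := by rw [hd₁, vecMul_eq_dotL]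
    have := hzero (col j) (hcolU j)
    rw [e1] at this
    simpa using this
  · -- ¬ 2-spannable → intersecting
    intro hTS c hc c' hc' hc0 hc0' hbot
    apply hTS
    obtain ⟨u, rfl⟩ := (hG c).mp hc
    obtain ⟨u', rfl⟩ := (hG _).mp hc'
    have hu : u ≠ 0 := by rintro rfl; exact hc0 (by simp)
    have hu' : u' ≠ 0 := by rintro rfl; exact hc0' (by simp)
    have hd0 : dotL u ≠ 0 := by
      intro h
      apply hu
      funext i
      have h2 : u i = 0 := by rw [← dotL_single u i, h]; simp
      simpa using h2
    have hd0' : dotL u' ≠ 0 := by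
      intro h
      apply hu'
      funext i
      have h2 : u' i = 0 := by rw [← dotL_single u' i, h]; simp
      simpa using h2
    refine ⟨LinearMap.ker (dotL u), LinearMap.ker (dotL u'), ⟨dotL u, hd0, rfl⟩,
      ⟨dotL u', hd0', rfl⟩, le_antisymm ?_ (sup_le inf_le_left inf_le_left)⟩
    intro x hx
    set Ψ : (Fin k → L) →ₗ[Fq] L × L :=
      ((dotL u).restrictScalars Fq).prod ((dotL u').restrictScalars Fq) with hΨ
    set D : Submodule Fq (L × L) := Submodule.map Ψ U with hD
    have hmem : (dotL u x, (0 : L)) ∈ D := by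
      by_contra hmem
      obtain ⟨F, hF0, hFz⟩ := exists_sep Fq D hmem
      set f₁ : L →ₗ[Fq] Fq := F.comp (LinearMap.inl Fq L L) with hf₁
      set f₂ : L →ₗ[Fq] Fq := -(F.comp (LinearMap.inr Fq L L)) with hf₂
      have hagree : ∀ y ∈ U, f₁ (dotL u y) = f₂ (dotL u' y) := by
        intro y hy
        have h0 : F (Ψ y) = 0 := hF0 _ (Submodule.mem_map_of_mem hy)
        have hsplit : Ψ y = (LinearMap.inl Fq L L) (dotL u y) +
            (LinearMap.inr Fq L L) (dotL u' y) := by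
          simp [hΨ, Prod.ext_iff]
        rw [hsplit, map_add] at h0
        simp only [hf₁, hf₂, LinearMap.comp_apply, LinearMap.neg_apply]
        exact eq_neg_of_add_eq_zero_left h0
      have hv1 : (fun j => f₁ (Matrix.vecMul u G j)) ∈ rsupp Fq (Matrix.vecMul u G) :=
        (mem_rsupp_iff (Fq := Fq) _ _).mpr ⟨f₁, rfl⟩
      have hveq : (fun j => f₁ (Matrix.vecMul u G j)) =
          fun j => f₂ (Matrix.vecMul u' G j) := by
        funext j
        rw [vecMul_eq_dotL, vecMul_eq_dotL]
        exact hagree (col j) (hcolU j)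
      have hv2 : (fun j => f₁ (Matrix.vecMul u G j)) ∈ rsupp Fq (Matrix.vecMul u' G) := by
        rw [hveq]
        exact (mem_rsupp_iff (Fq := Fq) _ _).mpr ⟨f₂, rfl⟩
      have hv0 : (fun j => f₁ (Matrix.vecMul u G j)) = 0 := by
        have : (fun j => f₁ (Matrix.vecMul u G j)) ∈
            rsupp Fq (Matrix.vecMul u G) ⊓ rsupp Fq (Matrix.vecMul u' G) :=
          Submodule.mem_inf.mpr ⟨hv1, hv2⟩
        rw [hbot] at this
        exact this
      have hgen : ∀ y ∈ U, f₁ (dotL u y) = 0 := by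
        intro y hy
        have hy' : y ∈ Submodule.span Fq (Set.range col) := hU ▸ hy
        refine LinearMap.eqOn_span (R := Fq)
          (f := f₁.comp ((dotL u).restrictScalars Fq)) (g := (0 : (Fin k → L) →ₗ[Fq] Fq))
          ?_ hy'
        rintro _ ⟨j, rfl⟩
        have := congrFun hv0 j
        rw [vecMul_eq_dotL] at this
        simpa using this
      apply hFz
      have : F (dotL u x, (0:L)) = f₁ (dotL u x) := by
        simp [hf₁]
      rw [this]
      exact hgen x hx
    obtain ⟨b, hbU, hb⟩ := hmem
    have h1 : dotL u b = dotL u x := by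
      have := congrArg Prod.fst hb
      simpa [hΨ] using this
    have h2 : dotL u' b = 0 := by
      have := congrArg Prod.snd hb
      simpa [hΨ] using this
    rw [Submodule.mem_sup]
    refine ⟨x - b, Submodule.mem_inf.mpr ⟨sub_mem hx hbU, ?_⟩, b,
      Submodule.mem_inf.mpr ⟨hbU, ?_⟩, by abel⟩
    · rw [Submodule.restrictScalars_mem, LinearMap.mem_ker, map_sub, h1, sub_self]
    · rw [Submodule.restrictScalars_mem, LinearMap.mem_ker]; exact h2
end

section
/- Let 2 ≤ k ≤ ⌊(m+1)/2⌋ and m ≤ n ≤ 2m - 2k + 1. Suppose W is an [m,k]_{q^m/q} system that is scattered with respect to hyperplanes (every F_{q^m}-hyperplane H satisfies dim_{F_q}(W ∩ H) ≤ k - 1), and let W̄ be an F_q-subspace of F_{q^m}^k of dimension r = n - m with W ∩ W̄ = {0}. Then U = W ⊕ W̄ satisfies dim_{F_q}(U ∩ H) < n/2 for every F_{q^m}-hyperplane H; in particular U is not 2-spannable. -/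
open Module Submodule

variable (Fq : Type*) {L : Type*} [Field Fq] [Field L] [Algebra Fq L]

/-- extending a system scattered w.r.t. hyperplanes by a complementary
subspace of dimension `r = n - m` (with `2 ≤ k ≤ ⌊(m+1)/2⌋` and `m ≤ n ≤ 2m - 2k + 1`)
yields a system all of whose hyperplane weights are `< n/2`; in particular it is not
2-spannable. -/
theorem stmt12 [FiniteDimensional Fq L] {k m n : ℕ} (hm : m = finrank Fq L)
    (hk2 : 2 ≤ k) (hkm : 2 * k ≤ m + 1) (hn1 : m ≤ n) (hn2 : n + 2 * k ≤ 2 * m + 1)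
    (W : Submodule Fq (Fin k → L)) (hW : finrank Fq W = m)
    (hWspan : Submodule.span L (W : Set (Fin k → L)) = ⊤)
    (hscat : ∀ H : Submodule L (Fin k → L), IsHyperplane H →
      finrank Fq ↥(W ⊓ H.restrictScalars Fq) + 1 ≤ k)
    (Wb : Submodule Fq (Fin k → L)) (hr : finrank Fq Wb = n - m)
    (hdisj : W ⊓ Wb = ⊥) :
    (∀ H : Submodule L (Fin k → L), IsHyperplane H →
        2 * finrank Fq ↥((W ⊔ Wb) ⊓ H.restrictScalars Fq) < n) ∧
      ¬ TwoSpannable Fq (W ⊔ Wb) := by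
  haveI : FiniteDimensional Fq (Fin k → L) := by infer_instance
  have hUdim : finrank Fq ↥(W ⊔ Wb) = n := by
    have h := Submodule.finrank_sup_add_finrank_inf_eq W Wb
    rw [hdisj] at h
    simp only [finrank_bot, add_zero] at h
    omega
  have key : ∀ H : Submodule L (Fin k → L), IsHyperplane H →
      2 * finrank Fq ↥((W ⊔ Wb) ⊓ H.restrictScalars Fq) < n := by
    intro H hH
    have h1 := hscat H hH
    set X := (W ⊔ Wb) ⊓ H.restrictScalars Fq with hX
    have hWX : W ⊓ X = W ⊓ H.restrictScalars Fq := by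
      rw [hX, ← inf_assoc, inf_eq_left.mpr (le_sup_left : W ≤ W ⊔ Wb)]
    have h2 := Submodule.finrank_sup_add_finrank_inf_eq W X
    rw [hWX] at h2
    have h3 : finrank Fq ↥(W ⊔ X) ≤ n := by
      rw [← hUdim]
      exact Submodule.finrank_mono (sup_le le_sup_left inf_le_left)
    omega
  refine ⟨key, ?_⟩
  rintro ⟨H₁, H₂, hH₁, hH₂, heq⟩
  have k1 := key H₁ hH₁
  have k2 := key H₂ hH₂
  have h4 := Submodule.finrank_sup_add_finrank_inf_eq
    ((W ⊔ Wb) ⊓ H₁.restrictScalars Fq) ((W ⊔ Wb) ⊓ H₂.restrictScalars Fq)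
  rw [← heq] at h4
  omega
end

section
/- Let U be an [n,k]_{q^m/q} system with n = 2m. Suppose there exists an F_{q^m}-subspace M of F_{q^m}^k of codimension 2 with U ∩ M = {0}. Then U is 2-spannable; indeed for any two distinct hyperplanes H₁, H₂ containing M, U = (U ∩ H₁) ⊕ (U ∩ H₂). -/
/-!
Every hyperplane `H ⊇ M` has `𝔽_q`-codimension `m` in `L^k`, so by Grassmann's formula
`dim (U ∩ H) ≥ dim U - m = m`. Two distinct hyperplanes through the codimension-2 subspace `M`
meet exactly in `M`, so their intersections with `U` meet in `U ∩ M = 0`; two independent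
subspaces of `U` of dimension at least `m` each fill the `2m`-dimensional space `U`.
-/

open Module Submodule

variable (Fq : Type*) {L : Type*} [Field Fq] [Field L] [Algebra Fq L]

section Grassmann

variable {K V : Type*} [DivisionRing K] [AddCommGroup V] [Module K V] [FiniteDimensional K V]

theorem Submodule.finrank_add_finrank_le_finrank_inf_add (U W : Submodule K V) :
    finrank K U + finrank K W ≤ finrank K ↥(U ⊓ W) + finrank K V := by
  rw [← finrank_sup_add_finrank_inf_eq U W, add_comm]
  exact Nat.add_le_add_left (finrank_le _) _

theorem Submodule.sup_eq_of_disjoint_of_finrank_le {A B U : Submodule K V} (hA : A ≤ U)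
    (hB : B ≤ U) (hAB : Disjoint A B) (hdim : finrank K U ≤ finrank K A + finrank K B) :
    A ⊔ B = U := by
  refine eq_of_le_of_finrank_le (sup_le hA hB) ?_
  rwa [← add_zero (finrank K ↥(A ⊔ B)), ← finrank_bot K V, ← hAB.eq_bot,
    finrank_sup_add_finrank_inf_eq]

end Grassmann

theorem Submodule.finrank_restrictScalars {V : Type*} [AddCommGroup V] [Module L V]
    [Module Fq V] [IsScalarTower Fq L V] (W : Submodule L V) :
    finrank Fq (W.restrictScalars Fq) = finrank Fq L * finrank L W := by
  rw [finrank_mul_finrank Fq L W]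
  exact ((W.restrictScalarsEquiv Fq).restrictScalars Fq).finrank_eq

section Hyperplane

variable {k : ℕ}

theorem IsHyperplane.finrank_add_one {H : Submodule L (Fin k → L)} (hH : IsHyperplane H) :
    finrank L H + 1 = k := by
  obtain ⟨φ, hφ, rfl⟩ := hH
  rw [Module.Dual.finrank_ker_add_one_of_ne_zero hφ, finrank_fin_fun]

theorem IsHyperplane.inf_eq_of_le {H₁ H₂ M : Submodule L (Fin k → L)} (hH₁ : IsHyperplane H₁)
    (hH₂ : IsHyperplane H₂) (hne : H₁ ≠ H₂) (hM : finrank L M + 2 = k) (h₁ : M ≤ H₁)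
    (h₂ : M ≤ H₂) : H₁ ⊓ H₂ = M := by
  have hd₁ := hH₁.finrank_add_one
  have hd₂ := hH₂.finrank_add_one
  have hlt : H₁ ⊓ H₂ < H₁ := inf_le_left.lt_of_ne fun h =>
    hne (eq_of_le_of_finrank_le (h ▸ inf_le_right) (by omega))
  have := finrank_lt_finrank_of_lt hlt
  exact (eq_of_le_of_finrank_le (le_inf h₁ h₂) (by omega)).symm

theorem exists_isHyperplane_ne_of_finrank_add_two (M : Submodule L (Fin k → L))
    (hM : finrank L M + 2 = k) :
    ∃ H₁ H₂ : Submodule L (Fin k → L), IsHyperplane H₁ ∧ IsHyperplane H₂ ∧ H₁ ≠ H₂ ∧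
      M ≤ H₁ ∧ M ≤ H₂ := by
  have hQ : finrank L ((Fin k → L) ⧸ M) = 2 := by
    have := M.finrank_quotient_add_finrank
    rw [finrank_fin_fun] at this
    omega
  -- hyperplanes through `M` are the kernels of the coordinate functionals of `(L^k)/M ≅ L^2`
  let b := finBasisOfFinrankEq L _ hQ
  let φ : Fin 2 → ((Fin k → L) →ₗ[L] L) := fun i => (b.coord i).comp M.mkQ
  have hφ : ∀ i j x, M.mkQ x = b j → φ i x = if j = i then 1 else 0 := by
    intro i j x hx
    simp [φ, hx, Finsupp.single_apply]
  obtain ⟨x₀, hx₀⟩ := M.mkQ_surjective (b 0)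
  obtain ⟨x₁, hx₁⟩ := M.mkQ_surjective (b 1)
  have hM_le : ∀ i, M ≤ LinearMap.ker (φ i) := fun i =>
    (ker_mkQ M).ge.trans (LinearMap.ker_le_ker_comp _ _)
  refine ⟨LinearMap.ker (φ 0), LinearMap.ker (φ 1),
    ⟨φ 0, fun h => ?_, rfl⟩, ⟨φ 1, fun h => ?_, rfl⟩, fun h => ?_, hM_le 0, hM_le 1⟩
  · simpa [hφ 0 0 x₀ hx₀] using LinearMap.congr_fun h x₀
  · simpa [hφ 1 1 x₁ hx₁] using LinearMap.congr_fun h x₁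
  · have hx₀_ker : x₀ ∈ LinearMap.ker (φ 1) := by simp [hφ 1 0 x₀ hx₀]
    rw [← h, LinearMap.mem_ker, hφ 0 0 x₀ hx₀] at hx₀_ker
    simp at hx₀_ker

theorem le_finrank_inf_restrictScalars_add [FiniteDimensional Fq L]
    (U : Submodule Fq (Fin k → L)) {H : Submodule L (Fin k → L)} (hH : IsHyperplane H) :
    finrank Fq U ≤ finrank Fq ↥(U ⊓ H.restrictScalars Fq) + finrank Fq L := by
  have h := finrank_add_finrank_le_finrank_inf_add U (H.restrictScalars Fq)
  rw [finrank_restrictScalars, ← finrank_mul_finrank Fq L (Fin k → L), finrank_fin_fun] at h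
  have hk : finrank Fq L * (finrank L H + 1) = finrank Fq L * k := by
    rw [hH.finrank_add_one]
  rw [mul_add_one] at hk
  omega

theorem eq_sup_and_disjoint_of_isHyperplane [FiniteDimensional Fq L]
    {U : Submodule Fq (Fin k → L)} (hU : finrank Fq U = 2 * finrank Fq L)
    {M H₁ H₂ : Submodule L (Fin k → L)} (hM : finrank L M + 2 = k)
    (hdisj : U ⊓ M.restrictScalars Fq = ⊥) (hH₁ : IsHyperplane H₁) (hH₂ : IsHyperplane H₂)
    (hne : H₁ ≠ H₂) (h₁ : M ≤ H₁) (h₂ : M ≤ H₂) :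
    U = (U ⊓ H₁.restrictScalars Fq) ⊔ (U ⊓ H₂.restrictScalars Fq) ∧
      (U ⊓ H₁.restrictScalars Fq) ⊓ (U ⊓ H₂.restrictScalars Fq) = ⊥ := by
  have hinf : (U ⊓ H₁.restrictScalars Fq) ⊓ (U ⊓ H₂.restrictScalars Fq) = ⊥ := by
    rw [inf_inf_inf_comm, inf_idem, ← restrictScalars_inf, hH₁.inf_eq_of_le hH₂ hne hM h₁ h₂,
      hdisj]
  have hdim₁ := le_finrank_inf_restrictScalars_add Fq U hH₁
  have hdim₂ := le_finrank_inf_restrictScalars_add Fq U hH₂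
  exact ⟨(sup_eq_of_disjoint_of_finrank_le inf_le_left inf_le_left (disjoint_iff.2 hinf)
    (by omega)).symm, hinf⟩

end Hyperplane

theorem stmt14 [FiniteDimensional Fq L] {k m n : ℕ} (hm : m = finrank Fq L)
    (hn : n = 2 * m) (U : Submodule Fq (Fin k → L)) (hU : finrank Fq U = n)
    (M : Submodule L (Fin k → L)) (hM : finrank L M + 2 = k)
    (hdisj : U ⊓ M.restrictScalars Fq = ⊥) :
    TwoSpannable Fq U ∧
      ∀ H₁ H₂ : Submodule L (Fin k → L), IsHyperplane H₁ → IsHyperplane H₂ → H₁ ≠ H₂ →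
        M ≤ H₁ → M ≤ H₂ →
          U = (U ⊓ H₁.restrictScalars Fq) ⊔ (U ⊓ H₂.restrictScalars Fq) ∧
          (U ⊓ H₁.restrictScalars Fq) ⊓ (U ⊓ H₂.restrictScalars Fq) = ⊥ := by
  have key := fun H₁ H₂ ↦
    eq_sup_and_disjoint_of_isHyperplane (H₁ := H₁) (H₂ := H₂) Fq (hU.trans (hm ▸ hn)) hM hdisj
  obtain ⟨H₁, H₂, hH₁, hH₂, hne, h₁, h₂⟩ := exists_isHyperplane_ne_of_finrank_add_two M hM
  exact ⟨⟨H₁, H₂, hH₁, hH₂, (key H₁ H₂ hH₁ hH₂ hne h₁ h₂).1⟩, key⟩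
end

section
/- Let U be an [n,k]_{q^m/q} system with n > 2m, and suppose there exists an F_{q^m}-subspace M of codimension 2 with U + M = F_{q^m}^k (as F_q-spaces). Then U is 2-spannable. -/
/-!
Write `V = L^k`. The two coordinates of an isomorphism `V ⧸ M ≃ L²` are functionals whose kernels
`H₁, H₂` are hyperplanes with `H₁ ⊓ H₂ = M` and `H₁ ⊔ H₂ = V`. In the modular lattice of
`F_q`-subspaces, `U ⊔ (H₁ ⊓ H₂) = ⊤` and `H₁ ⊔ H₂ = ⊤` force `(U ⊓ H₁) ⊔ (U ⊓ H₂) = U`: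
the modular law gives `(H₁ ⊓ H₂) ⊔ (U ⊓ H₂) = H₂`, hence `H₁ ⊔ (U ⊓ H₂) = ⊤`, and meeting
with `U` once more yields the claim.
-/

open Module Submodule

variable (Fq : Type*) {L : Type*} [Field Fq] [Field L] [Algebra Fq L]

theorem inf_sup_inf_eq_left_of_sup_eq_top {α : Type*} [Lattice α] [BoundedOrder α]
    [IsModularLattice α] {u a b : α} (hab : a ⊔ b = ⊤) (hu : u ⊔ a ⊓ b = ⊤) :
    u ⊓ a ⊔ u ⊓ b = u := by
  have hb : a ⊓ b ⊔ u ⊓ b = b := by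
    rw [← sup_inf_assoc_of_le u inf_le_right, sup_comm, hu, top_inf_eq]
  have ha : a ⊔ u ⊓ b = ⊤ := by
    rwa [← hb, ← sup_assoc, sup_inf_self] at hab
  rw [inf_comm u a, sup_comm, ← sup_inf_assoc_of_le a inf_le_left, sup_comm, ha, top_inf_eq]

theorem exists_ker_inf_ker_eq_of_finrank_quotient_eq_two {K V : Type*} [Field K]
    [AddCommGroup V] [Module K V] (M : Submodule K V) (hM : finrank K (V ⧸ M) = 2) :
    ∃ f g : V →ₗ[K] K, f ≠ 0 ∧ g ≠ 0 ∧
      LinearMap.ker f ⊓ LinearMap.ker g = M ∧ LinearMap.ker f ⊔ LinearMap.ker g = ⊤ := by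
  have : Module.Finite K (V ⧸ M) := Module.finite_of_finrank_pos (by omega)
  let e : (V ⧸ M) ≃ₗ[K] K × K := LinearEquiv.ofFinrankEq _ _ (by simp [hM])
  let ψ : V →ₗ[K] K × K := e.toLinearMap ∘ₗ M.mkQ
  have hψ : Function.Surjective ψ := e.surjective.comp M.mkQ_surjective
  obtain ⟨x, hx⟩ := hψ (1, 0)
  obtain ⟨y, hy⟩ := hψ (0, 1)
  refine ⟨LinearMap.fst K K K ∘ₗ ψ, LinearMap.snd K K K ∘ₗ ψ, ?_, ?_, ?_, ?_⟩
  · exact fun h => by simpa [hx] using LinearMap.congr_fun h x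
  · exact fun h => by simpa [hy] using LinearMap.congr_fun h y
  · rw [← LinearMap.ker_prod, ← LinearMap.prod_comp, LinearMap.pair_fst_snd, LinearMap.id_comp,
      LinearEquiv.ker_comp, ker_mkQ]
  · refine eq_top_iff.2 fun v _ =>
      mem_sup.2 ⟨v - (ψ v).1 • x, ?_, (ψ v).1 • x, ?_, sub_add_cancel _ _⟩ <;> simp [hx]

theorem stmt15 {k : ℕ} (U : Submodule Fq (Fin k → L))
    (M : Submodule L (Fin k → L)) (hM : finrank L M + 2 = k)
    (hsum : U ⊔ M.restrictScalars Fq = ⊤) :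
    TwoSpannable Fq U := by
  have hQ : finrank L ((Fin k → L) ⧸ M) = 2 := by
    have := M.finrank_quotient_add_finrank
    rw [finrank_fin_fun] at this
    omega
  obtain ⟨f, g, hf, hg, hinf, hsup⟩ := exists_ker_inf_ker_eq_of_finrank_quotient_eq_two M hQ
  refine ⟨LinearMap.ker f, LinearMap.ker g, ⟨f, hf, rfl⟩, ⟨g, hg, rfl⟩,
    (inf_sup_inf_eq_left_of_sup_eq_top ?_ ?_).symm⟩
  · rw [← restrictScalars_sup, hsup, restrictScalars_top]
  · rwa [← restrictScalars_inf, hinf]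
end

section
/- Let U be an [n,k]_{q^m/q} system with n = 2m - 1, and suppose there exists an F_{q^m}-subspace M of codimension 2 with U ∩ M = {0}. Then among the q^m + 1 hyperplanes containing M, exactly one has F_q-weight m in U and all others have weight m - 1; consequently U is 2-spannable. -/
open Module Submodule

section AuxGeneral

variable {K : Type*} [Field K]

lemma aux_finrank_map_of_disjoint {X Y : Type*} [AddCommGroup X] [Module K X] [AddCommGroup Y]
    [Module K Y] [FiniteDimensional K X] (f : X →ₗ[K] Y) (A : Submodule K X)
    (h : A ⊓ LinearMap.ker f = ⊥) :
    finrank K (A.map f) = finrank K A := by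
  have hinj : Function.Injective (f.comp A.subtype) := by
    rw [← LinearMap.ker_eq_bot, LinearMap.ker_comp, eq_bot_iff]
    rintro ⟨x, hxA⟩ hx
    have : x ∈ A ⊓ LinearMap.ker f := ⟨hxA, hx⟩
    rw [h] at this
    simpa using this
  have := LinearMap.finrank_range_of_inj hinj
  rwa [LinearMap.range_comp, Submodule.range_subtype] at this

lemma aux_finrank_inf_add {X Y : Type*} [AddCommGroup X] [Module K X] [AddCommGroup Y]
    [Module K Y] [FiniteDimensional K X] (f : X →ₗ[K] Y) (A : Submodule K X) :
    finrank K A = finrank K ↥(A ⊓ LinearMap.ker f) + finrank K ↥(A.map f) := by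
  have h := LinearMap.finrank_range_add_finrank_ker (f.comp A.subtype)
  rw [LinearMap.range_comp, Submodule.range_subtype] at h
  have h2 : finrank K ↥(LinearMap.ker (f.comp A.subtype)) = finrank K ↥(A ⊓ LinearMap.ker f) := by
    rw [LinearMap.ker_comp]
    have h3 := aux_finrank_map_of_disjoint A.subtype
      (comap A.subtype (LinearMap.ker f)) (by simp [Submodule.ker_subtype])
    rw [Submodule.map_comap_subtype] at h3
    exact h3.symm
  omega

lemma aux_ker_eq_iff_finrank {V : Type*} [AddCommGroup V] [Module K V] [FiniteDimensional K V]
    (H : Submodule K V) :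
    (∃ φ : V →ₗ[K] K, φ ≠ 0 ∧ H = LinearMap.ker φ) ↔ finrank K H + 1 = finrank K V := by
  constructor
  · rintro ⟨φ, hφ, rfl⟩
    have h1 : LinearMap.range φ = ⊤ := by
      have inst : IsSimpleOrder (Submodule K K) :=
        is_simple_module_of_finrank_eq_one (A := K) (finrank_self K)
      rcases eq_bot_or_eq_top (LinearMap.range φ) with h | h
      · exact absurd (LinearMap.range_eq_bot.mp h) hφ
      · exact h
    have := LinearMap.finrank_range_add_finrank_ker φ
    rw [h1, finrank_top, finrank_self] at this
    omega
  · intro h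
    have hq : finrank K (V ⧸ H) = 1 := by
      have := H.finrank_quotient_add_finrank
      omega
    obtain ⟨e⟩ := FiniteDimensional.nonempty_linearEquiv_of_finrank_eq
      (hq.trans (finrank_self K).symm)
    refine ⟨e.toLinearMap.comp H.mkQ, ?_, ?_⟩
    · intro h0
      have hH : H = ⊤ := by
        rw [← Submodule.ker_mkQ (p := H)]
        refine le_antisymm le_top ?_
        intro x _
        have hx : e (H.mkQ x) = 0 := LinearMap.congr_fun h0 x
        have : H.mkQ x = 0 := by
          apply e.injective; simpa using hx
        simpa [LinearMap.mem_ker] using this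
      rw [hH, finrank_top] at h
      omega
    · rw [LinearMap.ker_comp, LinearEquiv.ker, Submodule.comap_bot, Submodule.ker_mkQ]

lemma aux_lines_inf_eq_bot {W : Type*} [AddCommGroup W] [Module K W] [FiniteDimensional K W]
    {D D' : Submodule K W} (hD : finrank K D = 1) (hD' : finrank K D' = 1) (hne : D ≠ D') :
    D ⊓ D' = ⊥ := by
  by_contra hbot
  have h0 : finrank K ↥(D ⊓ D') ≠ 0 := fun h => hbot (Submodule.finrank_eq_zero.mp h)
  have h1 : finrank K ↥(D ⊓ D') ≤ 1 := hD ▸ Submodule.finrank_mono inf_le_left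
  have h2 : finrank K ↥(D ⊓ D') = 1 := by omega
  exact hne ((eq_of_le_of_finrank_eq inf_le_left (h2.symm ▸ hD.symm ▸ rfl)).symm.trans
    (eq_of_le_of_finrank_eq inf_le_right (h2.symm ▸ hD'.symm ▸ rfl)))

lemma aux_card_lines {W : Type*} [Fintype K] [AddCommGroup W] [Module K W]
    [FiniteDimensional K W] (h2 : finrank K W = 2) :
    {D : Submodule K W | finrank K D = 1}.ncard = Nat.card K + 1 := by
  classical
  haveI : Finite W := Module.finite_of_finite K
  haveI : Fintype W := Fintype.ofFinite W
  haveI : Finite (Submodule K W) :=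
    Finite.of_injective (fun D => (D : Set W)) SetLike.coe_injective
  haveI : Fintype (Submodule K W) := Fintype.ofFinite _
  set q : ℕ := Fintype.card K with hq
  have hq2 : 2 ≤ q := Fintype.one_lt_card
  set t : Finset (Submodule K W) :=
    Finset.univ.filter (fun D => finrank K D = 1) with ht
  set s : Finset W := Finset.univ.filter (fun w => w ≠ 0) with hs
  have hcard_s : s.card = q ^ 2 - 1 := by
    have : s = Finset.univ \ {0} := by
      ext w; simp [hs]
    rw [this, Finset.card_sdiff_of_subset (by simp), Finset.card_univ, Finset.card_singleton,
      card_eq_pow_finrank (K := K) (V := W), h2]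
  have hmaps : ∀ w ∈ s, (K ∙ w) ∈ t := by
    intro w hw
    simp only [hs, Finset.mem_filter] at hw
    simp only [ht, Finset.mem_filter, Finset.mem_univ, true_and]
    exact finrank_span_singleton hw.2
  have hsum := Finset.card_eq_sum_card_fiberwise hmaps
  have hfiber : ∀ D ∈ t, (s.filter fun w => (K ∙ w) = D).card = q - 1 := by
    intro D hD
    simp only [ht, Finset.mem_filter, Finset.mem_univ, true_and] at hD
    have hset : (s.filter fun w => (K ∙ w) = D) = Set.toFinset ((D : Set W) \ {0}) := by
      ext w
      simp only [Finset.mem_filter, hs, Finset.mem_univ, true_and, Set.mem_toFinset,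
        Set.mem_diff, SetLike.mem_coe, Set.mem_singleton_iff]
      constructor
      · rintro ⟨hw0, rfl⟩
        exact ⟨mem_span_singleton_self w, hw0⟩
      · rintro ⟨hwD, hw0⟩
        refine ⟨hw0, eq_of_le_of_finrank_eq ?_ ?_⟩
        · rwa [Submodule.span_singleton_le_iff_mem]
        · rw [finrank_span_singleton hw0, hD]
    rw [hset, Set.toFinset_diff, Finset.card_sdiff_of_subset (by
      simp [Set.subset_toFinset, Set.singleton_subset_iff, D.zero_mem])]
    have hD1 : Fintype.card D = q := by
      rw [card_eq_pow_finrank (K := K) (V := D), hD, pow_one]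
    simp [Set.toFinset_card, hD1]
  rw [Finset.sum_congr rfl hfiber, Finset.sum_const, smul_eq_mul] at hsum
  have htcard : t.card = q + 1 := by
    have h1 : (q + 1) * (q - 1) = q ^ 2 - 1 := by
      have := Nat.sq_sub_sq q 1
      simpa [one_pow] using this.symm
    refine Nat.eq_of_mul_eq_mul_right (show 0 < q - 1 by omega) ?_
    rw [h1, ← hcard_s, hsum]
  have : {D : Submodule K W | finrank K D = 1} = ↑t := by
    ext D; simp [ht]
  rw [this, Set.ncard_coe_finset, htcard, Nat.card_eq_fintype_card]

end AuxGeneral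

section AuxFactor

variable {Fq L : Type*} [Field Fq] [Field L] [Algebra Fq L] [FiniteDimensional Fq L]

lemma aux_exists_Llinear_factor {W : Type*} [AddCommGroup W] [Module L W] [Module Fq W]
    [IsScalarTower Fq L W] [FiniteDimensional L W] (f : W →ₗ[Fq] Fq) (hf : f ≠ 0) :
    ∃ ψ : W →ₗ[L] L, ψ ≠ 0 ∧ (LinearMap.ker ψ).restrictScalars Fq ≤ LinearMap.ker f := by
  haveI : FiniteDimensional Fq W := Module.Finite.trans L W
  have hm : 0 < finrank Fq L := finrank_pos
  set b := Module.finBasis Fq L with hb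
  set T : L →ₗ[Fq] Fq := b.coord ⟨0, hm⟩ with hT
  have hT0 : T ≠ 0 := by
    intro h
    have h1 : T (b ⟨0, hm⟩) = 1 := by simp [hT]
    rw [h] at h1
    simp at h1
  let Φ : (W →ₗ[L] L) →ₗ[Fq] (W →ₗ[Fq] Fq) :=
    { toFun := fun ψ => T.comp (ψ.restrictScalars Fq)
      map_add' := by intro ψ χ; ext w; simp
      map_smul' := by intro c ψ; ext w; simp }
  have hΦinj : Function.Injective Φ := by
    have : LinearMap.ker Φ = ⊥ := by
      rw [eq_bot_iff]
      intro ρ hρ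
      have hρ' : ∀ w, T (ρ w) = 0 := fun w => LinearMap.congr_fun hρ w
      simp only [mem_bot]
      by_contra hne
      obtain ⟨w, hw⟩ : ∃ w, ρ w ≠ 0 := by
        by_contra hc
        push_neg at hc
        exact hne (by ext w; simp [hc w])
      apply hT0
      ext a
      have := hρ' ((a * (ρ w)⁻¹) • w)
      simpa [map_smul, smul_eq_mul, mul_assoc, inv_mul_cancel₀ hw] using this
    exact LinearMap.ker_eq_bot.mp this
  have hΦsurj : Function.Surjective Φ := by
    have hdim : finrank Fq (W →ₗ[L] L) = finrank Fq (W →ₗ[Fq] Fq) := by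
      have h1 : finrank Fq (W →ₗ[L] L) = finrank Fq L * finrank L (W →ₗ[L] L) :=
        (Module.finrank_mul_finrank Fq L _).symm
      rw [Module.finrank_linearMap_self, h1, Module.finrank_linearMap_self,
        Module.finrank_mul_finrank]
    exact (LinearMap.injective_iff_surjective_of_finrank_eq_finrank hdim).mp hΦinj
  obtain ⟨ψ, hψ⟩ := hΦsurj f
  refine ⟨ψ, ?_, ?_⟩
  · rintro rfl
    rw [← hψ] at hf
    exact hf (by ext w; simp [Φ])
  · intro w hw
    have h0 : ψ w = 0 := hw
    have h1 : T (ψ w) = f w := LinearMap.congr_fun hψ w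
    simp only [LinearMap.mem_ker]
    rw [← h1, h0, map_zero]

end AuxFactor

variable (Fq : Type*) {L : Type*} [Field Fq] [Field L] [Algebra Fq L]

set_option maxHeartbeats 1000000 in
/-- for an `[2m-1,k]` system avoiding a codimension-2 subspace `M`,
there are `q^m + 1` hyperplanes through `M`, exactly one of which has weight `m` in `U`
while all the others have weight `m - 1`; consequently `U` is 2-spannable. -/
theorem stmt16 [Fintype Fq] [FiniteDimensional Fq L] {k m n : ℕ}
    (hm : m = finrank Fq L) (hn : n + 1 = 2 * m)
    (U : Submodule Fq (Fin k → L)) (hU : finrank Fq U = n)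
    (hspan : Submodule.span L (U : Set (Fin k → L)) = ⊤)
    (M : Submodule L (Fin k → L)) (hM : finrank L M + 2 = k)
    (hdisj : U ⊓ M.restrictScalars Fq = ⊥) :
    {H : Submodule L (Fin k → L) | IsHyperplane H ∧ M ≤ H}.ncard = Nat.card L + 1 ∧
    (∃! H : Submodule L (Fin k → L), (IsHyperplane H ∧ M ≤ H) ∧
        finrank Fq ↥(U ⊓ H.restrictScalars Fq) = m) ∧
    (∀ H : Submodule L (Fin k → L), IsHyperplane H → M ≤ H →
        finrank Fq ↥(U ⊓ H.restrictScalars Fq) ≠ m →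
        finrank Fq ↥(U ⊓ H.restrictScalars Fq) = m - 1) ∧
    TwoSpannable Fq U := by
  classical
  haveI : FiniteDimensional Fq (Fin k → L) := Module.Finite.trans L _
  haveI : FiniteDimensional Fq ((Fin k → L) ⧸ M) := Module.Finite.trans L _
  have hm1 : 1 ≤ m := by rw [hm]; exact finrank_pos
  have hk : finrank L (Fin k → L) = k := Module.finrank_fin_fun L
  have hW2 : finrank L ((Fin k → L) ⧸ M) = 2 := by
    have := M.finrank_quotient_add_finrank
    rw [hk] at this
    omega
  have hWFq : finrank Fq ((Fin k → L) ⧸ M) = 2 * m := by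
    rw [← Module.finrank_mul_finrank Fq L ((Fin k → L) ⧸ M), hW2, hm]
    ring
  set ρ : (Fin k → L) →ₗ[Fq] ((Fin k → L) ⧸ M) := M.mkQ.restrictScalars Fq with hρ
  have hkerρ : LinearMap.ker ρ = M.restrictScalars Fq := by
    rw [hρ, LinearMap.ker_restrictScalars, Submodule.ker_mkQ]
  set V : Submodule Fq ((Fin k → L) ⧸ M) := U.map ρ with hVdef
  have hVn : finrank Fq V = n := by
    rw [hVdef, aux_finrank_map_of_disjoint ρ U (by rw [hkerρ]; exact hdisj), hU]
  -- restrictScalars of a line has Fq-dimension m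
  have hlinem : ∀ D : Submodule L ((Fin k → L) ⧸ M), finrank L D = 1 →
      finrank Fq ↥(D.restrictScalars Fq) = m := by
    intro D hD
    have h1 : finrank Fq ↥(D.restrictScalars Fq) = finrank Fq ↥D := rfl
    rw [h1, ← Module.finrank_mul_finrank Fq L ↥D, hD, mul_one, hm]
  -- the correspondence between hyperplanes through M and lines of the quotient
  have hcor : ∀ H : Submodule L (Fin k → L), (IsHyperplane H ∧ M ≤ H) ↔
      ∃ D : Submodule L ((Fin k → L) ⧸ M), finrank L D = 1 ∧ H = D.comap M.mkQ := by
    intro H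
    constructor
    · rintro ⟨hH, hMH⟩
      have hHfin : finrank L H + 1 = k := by
        have := (aux_ker_eq_iff_finrank H).mp hH
        rwa [hk] at this
      refine ⟨H.map M.mkQ, ?_, ?_⟩
      · have h := aux_finrank_inf_add M.mkQ H
        rw [Submodule.ker_mkQ, inf_eq_right.mpr hMH] at h
        omega
      · rw [Submodule.comap_map_eq, Submodule.ker_mkQ, sup_eq_left.mpr hMH]
    · rintro ⟨D, hD1, rfl⟩
      have hMle : M ≤ D.comap M.mkQ := by
        intro x hx
        have : M.mkQ x = 0 := by
          rw [← LinearMap.mem_ker, Submodule.ker_mkQ]; exact hx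
        simp [Submodule.mem_comap, this]
      constructor
      · rw [IsHyperplane, aux_ker_eq_iff_finrank, hk]
        have h := aux_finrank_inf_add M.mkQ (D.comap M.mkQ)
        rw [Submodule.ker_mkQ, inf_eq_right.mpr hMle, Submodule.map_comap_eq,
          Submodule.range_mkQ, top_inf_eq, hD1] at h
        omega
      · exact hMle
  -- weight identity
  have hwt : ∀ D : Submodule L ((Fin k → L) ⧸ M),
      finrank Fq ↥(U ⊓ (D.comap M.mkQ).restrictScalars Fq) =
        finrank Fq ↥(V ⊓ D.restrictScalars Fq) := by
    intro D
    have hres : (D.comap M.mkQ).restrictScalars Fq = comap ρ (D.restrictScalars Fq) := rfl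
    have hmap : (U ⊓ comap ρ (D.restrictScalars Fq)).map ρ = V ⊓ D.restrictScalars Fq := by
      rw [hVdef, Submodule.map_inf_eq_map_inf_comap]
    rw [hres, ← hmap]
    refine (aux_finrank_map_of_disjoint ρ _ ?_).symm
    rw [hkerρ, eq_bot_iff, ← hdisj]
    exact inf_le_inf_right _ inf_le_left
  -- weight bounds
  have hbounds : ∀ D : Submodule L ((Fin k → L) ⧸ M), finrank L D = 1 →
      m - 1 ≤ finrank Fq ↥(V ⊓ D.restrictScalars Fq) ∧
      finrank Fq ↥(V ⊓ D.restrictScalars Fq) ≤ m := by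
    intro D hD
    constructor
    · have h := aux_finrank_inf_add (D.restrictScalars Fq).mkQ V
      rw [Submodule.ker_mkQ] at h
      have h2 : finrank Fq ↥(V.map (D.restrictScalars Fq).mkQ) ≤ m := by
        refine le_trans (Submodule.finrank_le _) ?_
        have h3 := (D.restrictScalars Fq).finrank_quotient_add_finrank
        rw [hWFq, hlinem D hD] at h3
        omega
      omega
    · refine le_trans (Submodule.finrank_mono inf_le_right) ?_
      rw [hlinem D hD]
  -- existence of a line of weight m
  obtain ⟨φ, hφ0, hφ⟩ : ∃ φ : ((Fin k → L) ⧸ M) →ₗ[Fq] Fq, φ ≠ 0 ∧ V = LinearMap.ker φ :=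
    (aux_ker_eq_iff_finrank (K := Fq) V).mpr (by rw [hVn, hWFq]; omega)
  obtain ⟨ψ, hψ0, hψle⟩ := aux_exists_Llinear_factor (L := L) φ hφ0
  set D₀ : Submodule L ((Fin k → L) ⧸ M) := LinearMap.ker ψ with hD₀def
  have hD₀ : finrank L D₀ = 1 := by
    have h := (aux_ker_eq_iff_finrank D₀).mp ⟨ψ, hψ0, hD₀def⟩
    rw [hW2] at h
    omega
  have hD₀le : D₀.restrictScalars Fq ≤ V := by rw [hφ]; exact hψle
  have hwt₀ : finrank Fq ↥(V ⊓ D₀.restrictScalars Fq) = m := by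
    rw [inf_eq_right.mpr hD₀le]
    exact hlinem D₀ hD₀
  -- uniqueness of the line of weight m
  have huniq : ∀ D : Submodule L ((Fin k → L) ⧸ M), finrank L D = 1 →
      finrank Fq ↥(V ⊓ D.restrictScalars Fq) = m → D = D₀ := by
    intro D hD hwtD
    by_contra hne
    have hinf : D ⊓ D₀ = ⊥ := aux_lines_inf_eq_bot hD hD₀ hne
    have hdisj2 : (V ⊓ D.restrictScalars Fq) ⊓ (V ⊓ D₀.restrictScalars Fq) = ⊥ := by
      rw [eq_bot_iff]
      rintro x ⟨⟨-, hx1⟩, ⟨-, hx2⟩⟩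
      have : x ∈ D ⊓ D₀ := ⟨hx1, hx2⟩
      rw [hinf] at this
      simpa using this
    have hs := Submodule.finrank_sup_add_finrank_inf_eq
      (V ⊓ D.restrictScalars Fq) (V ⊓ D₀.restrictScalars Fq)
    rw [hdisj2, finrank_bot, hwtD, hwt₀] at hs
    have hle : (V ⊓ D.restrictScalars Fq) ⊔ (V ⊓ D₀.restrictScalars Fq) ≤ V :=
      sup_le inf_le_left inf_le_left
    have hle2 := Submodule.finrank_mono hle
    rw [hVn] at hle2
    omega
  -- the set of hyperplanes through M is the image of the set of lines
  have hset : {H : Submodule L (Fin k → L) | IsHyperplane H ∧ M ≤ H}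
      = (fun D : Submodule L ((Fin k → L) ⧸ M) => D.comap M.mkQ) ''
        {D | finrank L D = 1} := by
    ext H
    simp only [Set.mem_setOf_eq, Set.mem_image]
    rw [hcor H]
    constructor
    · rintro ⟨D, h1, h2⟩; exact ⟨D, h1, h2.symm⟩
    · rintro ⟨D, h1, h2⟩; exact ⟨D, h1, h2.symm⟩
  haveI : Finite L := Module.finite_of_finite Fq
  haveI : Fintype L := Fintype.ofFinite L
  have hcount : {H : Submodule L (Fin k → L) | IsHyperplane H ∧ M ≤ H}.ncard
      = Nat.card L + 1 := by
    rw [hset, Set.ncard_image_of_injective _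
      (Submodule.comap_injective_of_surjective (Submodule.mkQ_surjective M))]
    exact aux_card_lines hW2
  refine ⟨hcount, ⟨D₀.comap M.mkQ, ⟨(hcor _).mpr ⟨D₀, hD₀, rfl⟩, by rw [hwt D₀]; exact hwt₀⟩, ?_⟩,
    ?_, ?_⟩
  · -- uniqueness of the hyperplane
    rintro H ⟨hH, hwH⟩
    obtain ⟨D, hD, rfl⟩ := (hcor H).mp hH
    rw [hwt D] at hwH
    rw [huniq D hD hwH]
  · -- all other weights are m - 1
    intro H hH hMH hne
    obtain ⟨D, hD, rfl⟩ := (hcor H).mp ⟨hH, hMH⟩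
    rw [hwt D] at hne ⊢
    have := hbounds D hD
    omega
  · -- 2-spannability
    obtain ⟨b⟩ : Nonempty (Basis (Fin 2) L ((Fin k → L) ⧸ M)) :=
      ⟨Module.finBasisOfFinrankEq L ((Fin k → L) ⧸ M) hW2⟩
    have hex2 : ∃ D₂ : Submodule L ((Fin k → L) ⧸ M), finrank L D₂ = 1 ∧ D₂ ≠ D₀ := by
      by_cases hc : (L ∙ b 0) = D₀
      · refine ⟨L ∙ b 1, finrank_span_singleton (b.ne_zero 1), ?_⟩
        intro h
        have hb0 : b 0 ∈ D₀ := hc ▸ mem_span_singleton_self _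
        have hb1 : b 1 ∈ D₀ := h ▸ mem_span_singleton_self _
        have htop : (⊤ : Submodule L ((Fin k → L) ⧸ M)) ≤ D₀ := by
          rw [← b.span_eq]
          refine Submodule.span_le.mpr ?_
          rintro x ⟨i, rfl⟩
          fin_cases i
          · exact hb0
          · exact hb1
        have hDtop : D₀ = ⊤ := top_le_iff.mp htop
        rw [hDtop, finrank_top, hW2] at hD₀
        omega
      · exact ⟨L ∙ b 0, finrank_span_singleton (b.ne_zero 0), hc⟩
    obtain ⟨D₂, hD₂, hD₂ne⟩ := hex2
    have hw2 : finrank Fq ↥(V ⊓ D₂.restrictScalars Fq) = m - 1 := by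
      have hb := hbounds D₂ hD₂
      have hne : finrank Fq ↥(V ⊓ D₂.restrictScalars Fq) ≠ m :=
        fun h => hD₂ne (huniq D₂ hD₂ h)
      omega
    refine ⟨D₀.comap M.mkQ, D₂.comap M.mkQ, ((hcor _).mpr ⟨D₀, hD₀, rfl⟩).1,
      ((hcor _).mpr ⟨D₂, hD₂, rfl⟩).1, ?_⟩
    have hinf : D₀ ⊓ D₂ = ⊥ := aux_lines_inf_eq_bot hD₀ hD₂ (Ne.symm hD₂ne)
    set A := U ⊓ (D₀.comap M.mkQ).restrictScalars Fq with hA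
    set B := U ⊓ (D₂.comap M.mkQ).restrictScalars Fq with hB
    have hAB : A ⊓ B = ⊥ := by
      rw [eq_bot_iff]
      rintro x ⟨⟨hxU, hx0⟩, ⟨-, hx2⟩⟩
      have hq : M.mkQ x ∈ D₀ ⊓ D₂ := ⟨hx0, hx2⟩
      rw [hinf] at hq
      have hxM : x ∈ M.restrictScalars Fq := by
        have : M.mkQ x = 0 := by simpa using hq
        rw [Submodule.restrictScalars_mem, ← Submodule.ker_mkQ (p := M)]
        exact this
      have : x ∈ U ⊓ M.restrictScalars Fq := ⟨hxU, hxM⟩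
      rw [hdisj] at this
      simpa using this
    have hs := Submodule.finrank_sup_add_finrank_inf_eq A B
    rw [hAB, finrank_bot] at hs
    have hArank : finrank Fq ↥A = m := by rw [hA, hwt D₀]; exact hwt₀
    have hBrank : finrank Fq ↥B = m - 1 := by rw [hB, hwt D₂]; exact hw2
    have hsup : finrank Fq ↥(A ⊔ B) = finrank Fq ↥U := by
      rw [hU]
      omega
    exact (eq_of_le_of_finrank_eq (sup_le inf_le_left inf_le_left) hsup).symm
end
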